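/- arXiv:0801.0702 — 4 statements merged into one kernel-verified Lean document; each statement's English description precedes it below -/
import Mathlib

section
/- With the feedback choice f = κ·Tr(ρ_d·[−iH₁, ρ]) with κ > 0, the time derivative of V(ρ, ρ_d) = Tr[ρ_d²] − Tr[ρ·ρ_d] along the coupled flow ρ' = −i[H₀ + f H₁, ρ], ρ_d' = −i[H₀, ρ_d] equals −f²/κ ≤ 0. -/
/-!
Since `ad K` is a derivation and the trace vanishes on commutators, `Tr (A * B)` is conserved
when `A` and `B` evolve under the same Hamiltonian `K`. Splitting the Hamiltonian of `ρ` as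
`H₀ + f • H₁`, only the feedback term `f • (-i [H₁, ρ])` contributes to `V'`, which is therefore
`-f * Tr (ρ_d (-i [H₁, ρ])) = -f² / κ`. The feedback `f` is real, being `κ` times the trace of a
product of two Hermitian matrices, so `-f² / κ ≤ 0`.
-/

open Matrix

theorem Matrix.hasDerivAt_trace_mul {m 𝕜 𝔸 : Type*} [Fintype m] [NontriviallyNormedField 𝕜]
    [NormedCommRing 𝔸] [NormedAlgebra 𝕜 𝔸] {A B : 𝕜 → Matrix m m 𝔸} {A' B' : Matrix m m 𝔸}
    {t : 𝕜} (hA : ∀ i j, HasDerivAt (fun s => A s i j) (A' i j) t)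
    (hB : ∀ i j, HasDerivAt (fun s => B s i j) (B' i j) t) :
    HasDerivAt (fun s => (A s * B s).trace) ((A' * B t).trace + (A t * B').trace) t := by
  simp only [trace, diag, mul_apply, ← Finset.sum_add_distrib]
  exact HasDerivAt.fun_sum fun i _ => HasDerivAt.fun_sum fun j _ => (hA i j).mul (hB j i)

section Commutator

variable {m R : Type*} [Fintype m] [CommRing R]

theorem Matrix.trace_commutator_mul_add_mul_commutator (K A B : Matrix m m R) :
    ((K * A - A * K) * B).trace + (A * (K * B - B * K)).trace = 0 := by
  rw [sub_mul, mul_sub, trace_sub, trace_sub, ← Matrix.mul_assoc, ← Matrix.mul_assoc,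
    trace_mul_cycle A B K]
  abel

theorem Matrix.trace_smul_commutator_mul_add_mul_smul_commutator (c : R) (K A B : Matrix m m R) :
    (c • (K * A - A * K) * B).trace + (A * (c • (K * B - B * K))).trace = 0 := by
  rw [Matrix.smul_mul, Matrix.mul_smul, trace_smul, trace_smul, ← smul_add,
    trace_commutator_mul_add_mul_commutator, smul_zero]

end Commutator

section ComplexMatrix

variable {m : Type*} [Fintype m]

theorem Matrix.IsHermitian.star_trace_mul {α : Type*} [CommRing α] [StarRing α]
    {A B : Matrix m m α} (hA : A.IsHermitian) (hB : B.IsHermitian) :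
    star (A * B).trace = (A * B).trace := by
  rw [← trace_conjTranspose, conjTranspose_mul, hA.eq, hB.eq, trace_mul_comm]

theorem Matrix.IsHermitian.neg_I_smul_commutator {H P : Matrix m m ℂ} (hH : H.IsHermitian)
    (hP : P.IsHermitian) : (-Complex.I • (H * P - P * H)).IsHermitian := by
  rw [IsHermitian, conjTranspose_smul, conjTranspose_sub, conjTranspose_mul, conjTranspose_mul,
    hH.eq, hP.eq, star_neg, Complex.star_def, Complex.conj_I, ← neg_sub, smul_neg, neg_smul,
    neg_neg]

theorem Matrix.neg_I_smul_commutator_add_smul (H₀ H₁ P : Matrix m m ℂ) (c : ℂ) :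
    -Complex.I • ((H₀ + c • H₁) * P - P * (H₀ + c • H₁)) =
      -Complex.I • (H₀ * P - P * H₀) + c • (-Complex.I • (H₁ * P - P * H₁)) := by
  simp only [add_mul, mul_add, Matrix.smul_mul, Matrix.mul_smul]
  module

end ComplexMatrix

theorem stmt_3_general {n : ℕ} (H₀ H₁ : Matrix (Fin n) (Fin n) ℂ)
    (hH₁ : H₁.IsHermitian)
    (κ : ℝ) (hκ : 0 < κ)
    (ρ ρd : ℝ → Matrix (Fin n) (Fin n) ℂ)
    (hρherm : ∀ t, (ρ t).IsHermitian) (hρdherm : ∀ t, (ρd t).IsHermitian)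
    (f : ℝ → ℂ)
    (hf : ∀ t, f t = (κ : ℂ) * ((ρd t) * (-Complex.I • (H₁ * ρ t - ρ t * H₁))).trace)
    (hρ : ∀ (i j : Fin n) (t : ℝ),
      HasDerivAt (fun s => ρ s i j)
        ((-Complex.I • ((H₀ + f t • H₁) * ρ t - ρ t * (H₀ + f t • H₁))) i j) t)
    (hρd : ∀ (i j : Fin n) (t : ℝ),
      HasDerivAt (fun s => ρd s i j)
        ((-Complex.I • (H₀ * ρd t - ρd t * H₀)) i j) t)
    (V : ℝ → ℂ)
    (hV : ∀ t, V t = (ρd t * ρd t).trace - (ρ t * ρd t).trace) :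
    ∀ t, HasDerivAt V (-(f t) ^ 2 / (κ : ℂ)) t ∧ (-(f t) ^ 2 / (κ : ℂ)).im = 0 ∧
      (-(f t) ^ 2 / (κ : ℂ)).re ≤ 0 := by
  intro t
  set g := (ρd t * (-Complex.I • (H₁ * ρ t - ρ t * H₁))).trace
  have hg_real : (g.re : ℂ) = g := Complex.conj_eq_iff_re.mp <|
    (hρdherm t).star_trace_mul (hH₁.neg_I_smul_commutator (hρherm t))
  have hf_real : f t = ((κ * g.re : ℝ) : ℂ) := by push_cast [hg_real]; exact hf t
  have hρd_conserved := trace_smul_commutator_mul_add_mul_smul_commutator (-Complex.I) H₀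
    (ρd t) (ρd t)
  have hρ_feedback :
      ((-Complex.I • ((H₀ + f t • H₁) * ρ t - ρ t * (H₀ + f t • H₁))) * ρd t).trace
        + (ρ t * (-Complex.I • (H₀ * ρd t - ρd t * H₀))).trace = f t * g := by
    rw [neg_I_smul_commutator_add_smul, add_mul, trace_add, add_right_comm,
      trace_smul_commutator_mul_add_mul_smul_commutator, zero_add, Matrix.smul_mul, trace_smul,
      trace_mul_comm, smul_eq_mul]
  refine ⟨?_, ?_, ?_⟩
  · rw [funext hV]
    refine ((hasDerivAt_trace_mul (hρd · · t) (hρd · · t)).sub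
      (hasDerivAt_trace_mul (hρ · · t) (hρd · · t))).congr_deriv ?_
    rw [hρd_conserved, hρ_feedback, hf t]
    field_simp
    ring
  all_goals rw [hf_real, ← Complex.ofReal_pow, ← Complex.ofReal_neg, ← Complex.ofReal_div]
  · exact Complex.ofReal_im _
  · exact div_nonpos_of_nonpos_of_nonneg (neg_nonpos.2 (sq_nonneg _)) hκ.le

theorem stmt_3 {n : ℕ} (H₀ H₁ : Matrix (Fin n) (Fin n) ℂ)
    (hH₀ : H₀.IsHermitian) (hH₁ : H₁.IsHermitian)
    (κ : ℝ) (hκ : 0 < κ)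
    (ρ ρd : ℝ → Matrix (Fin n) (Fin n) ℂ)
    (hρherm : ∀ t, (ρ t).IsHermitian) (hρdherm : ∀ t, (ρd t).IsHermitian)
    (f : ℝ → ℂ)
    (hf : ∀ t, f t = (κ : ℂ) * ((ρd t) * (-Complex.I • (H₁ * ρ t - ρ t * H₁))).trace)
    (hρ : ∀ (i j : Fin n) (t : ℝ),
      HasDerivAt (fun s => ρ s i j)
        ((-Complex.I • ((H₀ + f t • H₁) * ρ t - ρ t * (H₀ + f t • H₁))) i j) t)
    (hρd : ∀ (i j : Fin n) (t : ℝ),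
      HasDerivAt (fun s => ρd s i j)
        ((-Complex.I • (H₀ * ρd t - ρd t * H₀)) i j) t)
    (V : ℝ → ℂ)
    (hV : ∀ t, V t = (ρd t * ρd t).trace - (ρ t * ρd t).trace) :
    ∀ t, HasDerivAt V (-(f t) ^ 2 / (κ : ℂ)) t ∧ (-(f t) ^ 2 / (κ : ℂ)).im = 0 ∧
      (-(f t) ^ 2 / (κ : ℂ)).re ≤ 0 :=
  stmt_3_general H₀ H₁ hH₁ κ hκ ρ ρd hρherm hρdherm f hf hρ hρd V hV
end

section
/- Let H₀ = diag(a₁,…,a_n) be strongly regular (the differences ω_{kℓ} = a_ℓ − a_k for k < ℓ are nonzero and pairwise distinct in absolute value) and let H₁ be Hermitian with all off-diagonal entries b_{kℓ} ≠ 0. Then the iterated commutators B_m = ad_{−iH₀}^m(−iH₁) for m = 1,…,n²−n span the full (n²−n)-dimensional space of matrices in su(n) with zero diagonal. -/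
/-!
Since `-iH₀` is diagonal, `ad_{-iH₀}` acts entrywise: the `(k, l)` entry of `B_m` is
`λ_{kl}^m · (-i b_{kl})` with frequency `λ_{kl} = -i (a_k - a_l)`. Strong regularity makes the
`n² - n` off-diagonal frequencies distinct and nonzero, so a real relation `∑ g_m B_m = 0` gives
a polynomial `∑ g_m X^m` of degree `≤ n² - n` vanishing at all of them and at `0`; it is
therefore zero. Hence the `B_m` are `n² - n` independent elements of the zero-diagonal part of
`su(n)`, whose real dimension is at most `n² - n` (a skew-Hermitian zero-diagonal matrix is
determined by the real and imaginary parts of its entries above the diagonal).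
-/

open Matrix Polynomial Function

theorem linearIndependent_pow_mul {K ι : Type*} [Field K] [Fintype ι] {x c : ι → K}
    (hx : Injective x) (hx0 : ∀ i, x i ≠ 0) (hc : ∀ i, c i ≠ 0) {N : ℕ}
    (hN : N ≤ Fintype.card ι) :
    LinearIndependent K (fun m : Set.Icc 1 N => fun i => x i ^ (m : ℕ) * c i) := by
  classical
  rw [Fintype.linearIndependent_iff]
  intro g hg
  set q : K[X] := ∑ m : Set.Icc 1 N, C (g m) * X ^ (m : ℕ) with hq
  have hq_eval (y : K) : q.eval y = ∑ m : Set.Icc 1 N, g m * y ^ (m : ℕ) := by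
    simp [hq, eval_finsetSum]
  have hroots : ∀ y ∈ insert 0 (Finset.univ.image x), q.eval y = 0 := by
    simp only [Finset.mem_insert, Finset.mem_image, Finset.mem_univ, true_and]
    rintro y (rfl | ⟨i, rfl⟩)
    · rw [hq_eval]
      exact Finset.sum_eq_zero fun m _ => by
        simp [zero_pow (by have := m.2.1; omega : (m : ℕ) ≠ 0)]
    · have hi : (∑ m : Set.Icc 1 N, g m * x i ^ (m : ℕ)) * c i = 0 := by
        simpa [Finset.sum_mul, mul_assoc] using congrFun hg i
      rw [hq_eval]
      exact (mul_eq_zero.mp hi).resolve_right (hc i)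
  have hcard : (insert 0 (Finset.univ.image x)).card = Fintype.card ι + 1 := by
    rw [Finset.card_insert_of_notMem (by simpa using hx0),
      Finset.card_image_of_injective _ hx, Finset.card_univ]
  have hdeg : q.natDegree ≤ N :=
    natDegree_sum_le_of_forall_le _ _ fun m _ => (natDegree_C_mul_X_pow_le _ _).trans m.2.2
  have hq0 : q = 0 := eq_zero_of_natDegree_lt_card_of_eval_eq_zero' q _ hroots (by omega)
  intro m
  simpa [hq, finsetSum_coeff, coeff_C_mul_X_pow, Subtype.val_inj] using
    congrArg (coeff · (m : ℕ)) hq0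

theorem Fintype.card_subtype_fst_ne_snd (α : Type*) [Fintype α] [DecidableEq α] :
    Fintype.card {p : α × α // p.1 ≠ p.2}
      = Fintype.card α * Fintype.card α - Fintype.card α := by
  rw [Fintype.card_subtype, ← Finset.card_univ, ← Finset.offDiag_card]
  congr 1
  ext p
  simp

namespace Matrix

variable (ι : Type*)

def skewHermitianZeroDiag : Submodule ℝ (Matrix ι ι ℂ) where
  carrier := {X | Xᴴ = -X ∧ ∀ i, X i i = 0}
  add_mem' := by
    rintro X Y ⟨hX, hX'⟩ ⟨hY, hY'⟩
    exact ⟨by rw [conjTranspose_add, hX, hY, neg_add], fun i => by simp [hX' i, hY' i]⟩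
  zero_mem' := ⟨by simp, fun _ => rfl⟩
  smul_mem' := by
    rintro c X ⟨hX, hX'⟩
    exact ⟨by rw [conjTranspose_smul, hX, star_trivial, smul_neg], fun i => by simp [hX' i]⟩

variable {ι} [LinearOrder ι]

def offDiagReIm : Matrix ι ι ℂ →ₗ[ℝ] ({p : ι × ι // p.1 ≠ p.2} → ℝ) where
  toFun X p := if p.1.1 < p.1.2 then (X p.1.1 p.1.2).re else (X p.1.2 p.1.1).im
  map_add' X Y := by ext p; by_cases h : p.1.1 < p.1.2 <;> simp [h]
  map_smul' c X := by ext p; by_cases h : p.1.1 < p.1.2 <;> simp [h]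

theorem eq_zero_of_offDiagReIm_eq_zero {X : Matrix ι ι ℂ} (hX : X ∈ skewHermitianZeroDiag ι)
    (h : offDiagReIm X = 0) : X = 0 := by
  obtain ⟨hskew, hdiag⟩ := hX
  have hupper : ∀ k l, k < l → X k l = 0 := fun k l hkl => by
    have hre := congrFun h ⟨(k, l), hkl.ne⟩
    have him := congrFun h ⟨(l, k), hkl.ne'⟩
    simp only [offDiagReIm, LinearMap.coe_mk, AddHom.coe_mk, if_pos hkl, if_neg hkl.not_gt,
      Pi.zero_apply] at hre him
    exact Complex.ext hre him
  ext k l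
  rcases lt_trichotomy k l with hkl | rfl | hkl
  · exact hupper k l hkl
  · exact hdiag k
  · simpa [hupper l k hkl] using congrFun₂ hskew l k

theorem finrank_skewHermitianZeroDiag_le [Fintype ι] :
    Module.finrank ℝ (skewHermitianZeroDiag ι)
      ≤ Fintype.card ι * Fintype.card ι - Fintype.card ι := by
  classical
  have hinj : Injective (offDiagReIm ∘ₗ (skewHermitianZeroDiag ι).subtype) := by
    rw [← LinearMap.ker_eq_bot, LinearMap.ker_eq_bot']
    exact fun X hX => Subtype.ext (eq_zero_of_offDiagReIm_eq_zero X.2 hX)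
  refine (LinearMap.finrank_le_finrank_of_injective hinj).trans_eq ?_
  rw [Module.finrank_fintype_fun_eq_card, Fintype.card_subtype_fst_ne_snd]

end Matrix

section StrongRegularity

variable {ι : Type*} [LinearOrder ι] {a : ι → ℝ}

theorem injective_of_sub_ne_zero (hnz : ∀ k l : ι, k < l → a l - a k ≠ 0) : Injective a := by
  intro k l h
  by_contra hkl
  rcases lt_or_gt_of_ne hkl with hlt | hlt
  · exact hnz k l hlt (by rw [h, sub_self])
  · exact hnz l k hlt (by rw [h, sub_self])

theorem sym2_eq_of_abs_sub_eq
    (hreg : ∀ k l p q : ι, k < l → p < q → (k, l) ≠ (p, q) → |a l - a k| ≠ |a q - a p|)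
    {k l p q : ι} (hkl : k ≠ l) (hpq : p ≠ q) (h : |a k - a l| = |a p - a q|) :
    s(k, l) = s(p, q) := by
  by_contra hne
  rcases lt_or_gt_of_ne hkl with h₁ | h₁ <;> rcases lt_or_gt_of_ne hpq with h₂ | h₂ <;>
    refine hreg _ _ _ _ h₁ h₂ (fun heq => hne ?_) ?_ <;>
    first
    | (simp only [Prod.mk.injEq] at heq; obtain ⟨rfl, rfl⟩ := heq; simp)
    | simpa [abs_sub_comm] using h

theorem sub_injective_of_strongly_regular (hnz : ∀ k l : ι, k < l → a l - a k ≠ 0)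
    (hreg : ∀ k l p q : ι, k < l → p < q → (k, l) ≠ (p, q) →
      |a l - a k| ≠ |a q - a p|) :
    Injective fun p : {p : ι × ι // p.1 ≠ p.2} => a p.1.1 - a p.1.2 := by
  rintro ⟨⟨k, l⟩, hkl⟩ ⟨⟨p, q⟩, hpq⟩ h
  simp only at h
  rcases Sym2.eq_iff.mp (sym2_eq_of_abs_sub_eq hreg hkl hpq (congrArg abs h)) with
    ⟨rfl, rfl⟩ | ⟨rfl, rfl⟩
  · rfl
  · exact absurd (injective_of_sub_ne_zero hnz (by linarith : a k = a l)) hkl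

end StrongRegularity

theorem Matrix.iterate_diagonal_commutator_apply {ι α : Type*} [Fintype ι] [DecidableEq ι]
    [CommRing α] (d : ι → α) (Y : Matrix ι ι α) (m : ℕ) (k l : ι) :
    (fun Y => diagonal d * Y - Y * diagonal d)^[m] Y k l = (d k - d l) ^ m * Y k l := by
  induction m with
  | zero => simp
  | succ m ih =>
    rw [iterate_succ_apply', sub_apply, diagonal_mul, mul_diagonal, ih, pow_succ]
    ring

section Commutators

variable {ι : Type*} [Fintype ι] [DecidableEq ι]

noncomputable def adNegIDiagonal (a : ι → ℝ) (Y : Matrix ι ι ℂ) : Matrix ι ι ℂ :=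
  (-Complex.I • diagonal (fun k => (a k : ℂ))) * Y
    - Y * (-Complex.I • diagonal (fun k => (a k : ℂ)))

theorem iterate_adNegIDiagonal_apply (a : ι → ℝ) (Y : Matrix ι ι ℂ) (m : ℕ) (k l : ι) :
    (adNegIDiagonal a)^[m] Y k l = (-Complex.I * (a k - a l : ℝ)) ^ m * Y k l := by
  have hd : adNegIDiagonal a = fun Y =>
      diagonal (fun k => -Complex.I * a k) * Y - Y * diagonal (fun k => -Complex.I * a k) := by
    funext Y; rw [adNegIDiagonal, ← diagonal_smul]; rfl
  rw [hd, iterate_diagonal_commutator_apply]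
  push_cast
  ring

theorem iterate_adNegIDiagonal_mem_skewHermitianZeroDiag (a : ι → ℝ) {H : Matrix ι ι ℂ}
    (hH : H.IsHermitian) {m : ℕ} (hm : m ≠ 0) :
    (adNegIDiagonal a)^[m] (-Complex.I • H) ∈ skewHermitianZeroDiag ι := by
  refine ⟨?_, fun i => by simp [iterate_adNegIDiagonal_apply, hm]⟩
  ext k l
  have hkl : star (H l k) = H k l := by simpa using congrFun₂ hH.eq k l
  simp only [conjTranspose_apply, Matrix.neg_apply, iterate_adNegIDiagonal_apply,
    Matrix.smul_apply, smul_eq_mul, star_mul', star_pow, star_neg, hkl, Complex.star_def,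
    Complex.conj_I, Complex.conj_ofReal]
  rw [← neg_sub (a k), Complex.ofReal_neg]
  ring

end Commutators

theorem linearIndependent_iterate_adNegIDiagonal {ι : Type*} [Fintype ι] [LinearOrder ι]
    {a : ι → ℝ} (hnz : ∀ k l : ι, k < l → a l - a k ≠ 0)
    (hreg : ∀ k l p q : ι, k < l → p < q → (k, l) ≠ (p, q) → |a l - a k| ≠ |a q - a p|)
    {H : Matrix ι ι ℂ} (hconn : ∀ k l : ι, k ≠ l → H k l ≠ 0) {N : ℕ}
    (hN : N ≤ Fintype.card ι * Fintype.card ι - Fintype.card ι) :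
    LinearIndependent ℝ (fun m : Set.Icc 1 N => (adNegIDiagonal a)^[m] (-Complex.I • H)) := by
  let x : {p : ι × ι // p.1 ≠ p.2} → ℂ := fun p => -Complex.I * (a p.1.1 - a p.1.2 : ℝ)
  let c : {p : ι × ι // p.1 ≠ p.2} → ℂ := fun p => -Complex.I * H p.1.1 p.1.2
  have hI : -Complex.I ≠ 0 := neg_ne_zero.mpr Complex.I_ne_zero
  have hx : Injective x := (mul_right_injective₀ hI).comp
    (Complex.ofReal_injective.comp (sub_injective_of_strongly_regular hnz hreg))
  have hx0 (p) : x p ≠ 0 := mul_ne_zero hI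
    (Complex.ofReal_ne_zero.mpr (sub_ne_zero.mpr ((injective_of_sub_ne_zero hnz).ne p.2)))
  have hc (p) : c p ≠ 0 := mul_ne_zero hI (hconn _ _ p.2)
  let offDiagEntries : Matrix ι ι ℂ →ₗ[ℝ] ({p : ι × ι // p.1 ≠ p.2} → ℂ) :=
    LinearMap.pi fun p => entryLinearMap ℝ ℂ p.1.1 p.1.2
  have hentries :
      offDiagEntries ∘ (fun m : Set.Icc 1 N => (adNegIDiagonal a)^[m] (-Complex.I • H))
      = fun (m : Set.Icc 1 N) p => x p ^ (m : ℕ) * c p := by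
    funext m p
    simp [offDiagEntries, x, c, iterate_adNegIDiagonal_apply, Matrix.smul_apply]
  refine LinearIndependent.of_comp offDiagEntries ?_
  rw [hentries]
  exact (linearIndependent_pow_mul hx hx0 hc
    (hN.trans_eq (Fintype.card_subtype_fst_ne_snd ι).symm)).restrict_scalars' ℝ

theorem stmt_6 {n : ℕ} (a : Fin n → ℝ)
    (hnz : ∀ k l : Fin n, k < l → a l - a k ≠ 0)
    (hreg : ∀ k l p q : Fin n, k < l → p < q → (k, l) ≠ (p, q) →
      |a l - a k| ≠ |a q - a p|)
    (H₁ : Matrix (Fin n) (Fin n) ℂ) (hH₁ : H₁.IsHermitian)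
    (hconn : ∀ k l : Fin n, k ≠ l → H₁ k l ≠ 0) :
    let H₀ : Matrix (Fin n) (Fin n) ℂ := Matrix.diagonal (fun k => (a k : ℂ))
    let ad : Matrix (Fin n) (Fin n) ℂ → Matrix (Fin n) (Fin n) ℂ :=
      fun Y => (-Complex.I • H₀) * Y - Y * (-Complex.I • H₀)
    let B : ℕ → Matrix (Fin n) (Fin n) ℂ := fun m => ad^[m] (-Complex.I • H₁)
    Submodule.span ℝ (B '' (Set.Icc 1 (n ^ 2 - n)))
      = Submodule.span ℝ
          {X : Matrix (Fin n) (Fin n) ℂ | Xᴴ = -X ∧ ∀ i, X i i = 0} := by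
  intro H₀ ad B
  have hcard : Fintype.card (Fin n) * Fintype.card (Fin n) - Fintype.card (Fin n) = n ^ 2 - n := by
    rw [Fintype.card_fin, sq]
  change Submodule.span ℝ ((fun m => (adNegIDiagonal a)^[m] (-Complex.I • H₁)) '' _)
    = Submodule.span ℝ (skewHermitianZeroDiag (Fin n) : Set _)
  rw [Submodule.span_eq, Set.image_eq_range]
  refine Submodule.eq_of_le_of_finrank_le (Submodule.span_le.mpr ?_) ?_
  · rintro _ ⟨m, rfl⟩
    exact iterate_adNegIDiagonal_mem_skewHermitianZeroDiag a hH₁ (by have := m.2.1; omega)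
  · rw [finrank_span_eq_card (linearIndependent_iterate_adNegIDiagonal hnz hreg hconn hcard.ge),
      Fintype.card_ofFinset, Nat.card_Icc, Nat.add_sub_cancel, ← hcard]
    exact finrank_skewHermitianZeroDiag_le
end

section
/- Let ρ_d be an n×n Hermitian matrix and define J(U) = Tr(U ρ_d U† ρ_d) on the unitary group. If U₀ is a critical point of J, then [U₀ ρ_d U₀†, ρ_d] = 0. -/
/-!
Differentiating `t ↦ tr(e^{tX} A e^{tX}ᴴ ρ)` at `0`, with `A = U₀ ρ U₀ᴴ`, gives `tr([X, A] ρ) = tr(X [A, ρ])`,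
so criticality says that `[A, ρ]` is orthogonal to every skew-Hermitian `X`. As a commutator of
Hermitian matrices, `C = [A, ρ]` is itself skew-Hermitian; taking `X = C` yields
`tr(Cᴴ C) = -tr(C C) = 0`, hence `C = 0`.
-/

open Matrix
open scoped ComplexOrder Matrix.Norms.L2Operator

namespace Matrix

variable {m : Type*} [Fintype m]

theorem trace_commutator_mul {R : Type*} [CommRing R] (X A B : Matrix m m R) :
    ((X * A - A * X) * B).trace = (X * (A * B - B * A)).trace := by
  rw [Matrix.sub_mul, Matrix.mul_sub, trace_sub, trace_sub, Matrix.mul_assoc X,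
    Matrix.mul_assoc A, trace_mul_comm A, Matrix.mul_assoc]

theorem IsHermitian.conjTranspose_commutator {R : Type*} [Ring R] [StarRing R]
    {A B : Matrix m m R} (hA : A.IsHermitian) (hB : B.IsHermitian) :
    (A * B - B * A)ᴴ = -(A * B - B * A) := by
  rw [conjTranspose_sub, conjTranspose_mul, conjTranspose_mul, hA.eq, hB.eq, neg_sub]

theorem eq_zero_of_conjTranspose_eq_neg_of_trace_mul_self_eq_zero {R : Type*} [PartialOrder R]
    [NonUnitalRing R] [StarRing R] [StarOrderedRing R] [NoZeroDivisors R] {C : Matrix m m R}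
    (hC : Cᴴ = -C) (htr : (C * C).trace = 0) : C = 0 := by
  rw [← trace_conjTranspose_mul_self_eq_zero_iff, hC, Matrix.neg_mul, trace_neg, htr, neg_zero]

theorem deriv_trace_exp_smul_mul_conj [DecidableEq m] (X U A B : Matrix m m ℂ) :
    deriv (fun t : ℝ => (NormedSpace.exp ((t : ℂ) • X) * U * A * Uᴴ *
        (NormedSpace.exp ((t : ℂ) • X))ᴴ * B).trace) 0 =
      ((X * (U * A * Uᴴ) + U * A * Uᴴ * Xᴴ) * B).trace := by
  have hexp : HasDerivAt (fun t : ℝ => NormedSpace.exp ((t : ℂ) • X)) X 0 := by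
    simpa [Complex.coe_smul] using hasDerivAt_exp_smul_const (𝕂 := ℝ) X 0
  have hconj := ((((hexp.mul_const U).mul_const A).mul_const Uᴴ).mul hexp.star).mul_const B
  let traceCLM : Matrix m m ℂ →L[ℝ] ℂ :=
    ((traceLinearMap m ℂ ℂ).restrictScalars ℝ).toContinuousLinearMap
  simpa [traceCLM, Function.comp_def, star_eq_conjTranspose, Matrix.mul_assoc] using
    (traceCLM.hasFDerivAt.comp_hasDerivAt 0 hconj).deriv

end Matrix

theorem stmt_9_general {n : ℕ} (ρd U₀ : Matrix (Fin n) (Fin n) ℂ)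
    (hρd : ρd.IsHermitian)
    (hcrit : ∀ X : Matrix (Fin n) (Fin n) ℂ, Xᴴ = -X →
      deriv (fun t : ℝ =>
        ((NormedSpace.exp ((t : ℂ) • X)) * U₀ * ρd * U₀ᴴ *
          (NormedSpace.exp ((t : ℂ) • X))ᴴ * ρd).trace) 0 = 0) :
    (U₀ * ρd * U₀ᴴ) * ρd - ρd * (U₀ * ρd * U₀ᴴ) = 0 := by
  have hskew := (isHermitian_mul_mul_conjTranspose U₀ hρd).conjTranspose_commutator hρd
  refine eq_zero_of_conjTranspose_eq_neg_of_trace_mul_self_eq_zero hskew ?_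
  have hstat := hcrit _ hskew
  rwa [deriv_trace_exp_smul_mul_conj, hskew, Matrix.mul_neg, ← sub_eq_add_neg,
    trace_commutator_mul] at hstat

theorem stmt_9 {n : ℕ} (ρd U₀ : Matrix (Fin n) (Fin n) ℂ)
    (hρd : ρd.IsHermitian) (hU₀ : U₀ ∈ Matrix.unitaryGroup (Fin n) ℂ)
    (hcrit : ∀ X : Matrix (Fin n) (Fin n) ℂ, Xᴴ = -X →
      deriv (fun t : ℝ =>
        ((NormedSpace.exp ((t : ℂ) • X)) * U₀ * ρd * U₀ᴴ *
          (NormedSpace.exp ((t : ℂ) • X))ᴴ * ρd).trace) 0 = 0) :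
    (U₀ * ρd * U₀ᴴ) * ρd - ρd * (U₀ * ρd * U₀ᴴ) = 0 :=
  stmt_9_general ρd U₀ hρd hcrit
end

section
/- Let w₁ > … > w_n be real and let τ be a permutation that is neither the identity nor the order-reversal. Then there exist transpositions σ, σ' such that Σ_k w_k·w_{σ∘τ(k)} > Σ_k w_k·w_{τ(k)} and Σ_k w_k·w_{σ'∘τ(k)} < Σ_k w_k·w_{τ(k)}. -/
open Finset in
lemma swap_sum_key {n : ℕ} (w : Fin n → ℝ) (τ : Equiv.Perm (Fin n)) {p q : Fin n}
    (hpq : p ≠ q) :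
    ∑ k, w k * w ((Equiv.swap (τ p) (τ q) * τ) k) =
      ∑ k, w k * w (τ k) + (w p - w q) * (w (τ q) - w (τ p)) := by
  have h : ∑ k, (w k * w ((Equiv.swap (τ p) (τ q) * τ) k) - w k * w (τ k))
      = (w p - w q) * (w (τ q) - w (τ p)) := by
    rw [← Finset.sum_subset (Finset.subset_univ ({p, q} : Finset (Fin n)))]
    · rw [Finset.sum_pair hpq]
      simp only [Equiv.Perm.mul_apply, Equiv.swap_apply_left, Equiv.swap_apply_right]
      ring
    · intro x _ hx
      simp only [Finset.mem_insert, Finset.mem_singleton, not_or] at hx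
      have h1 : τ x ≠ τ p := fun h => hx.1 (τ.injective h)
      have h2 : τ x ≠ τ q := fun h => hx.2 (τ.injective h)
      simp [Equiv.Perm.mul_apply, Equiv.swap_apply_of_ne_of_ne h1 h2]
  rw [← h, Finset.sum_sub_distrib]
  ring

theorem stmt_12 {n : ℕ} (w : Fin n → ℝ) (hw : StrictAnti w)
    (τ : Equiv.Perm (Fin n)) (hτ1 : τ ≠ Equiv.refl (Fin n))
    (hτ2 : τ ≠ Fin.revPerm) :
    (∃ σ : Equiv.Perm (Fin n), (∃ p q : Fin n, p ≠ q ∧ σ = Equiv.swap p q) ∧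
      ∑ k, w k * w ((σ * τ) k) > ∑ k, w k * w (τ k)) ∧
    (∃ σ' : Equiv.Perm (Fin n), (∃ p q : Fin n, p ≠ q ∧ σ' = Equiv.swap p q) ∧
      ∑ k, w k * w ((σ' * τ) k) < ∑ k, w k * w (τ k)) := by
  -- τ is not strictly monotone
  have hnm : ¬ StrictMono (τ : Fin n → Fin n) := by
    intro h
    apply hτ1
    have : (τ : Fin n → Fin n) = id := by
      haveI : WellFoundedLT (Fin n) := inferInstance
      have hr : Set.range (τ : Fin n → Fin n) = Set.range (id : Fin n → Fin n) := by
        simp [Set.range_id, Set.range_eq_univ.2 τ.surjective]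
      exact (StrictMono.range_inj h strictMono_id).1 hr
    apply Equiv.ext
    intro x
    simpa using congrFun this x
  -- τ is not strictly antitone
  have hna : ¬ StrictAnti (τ : Fin n → Fin n) := by
    intro h
    apply hτ2
    have hrev : StrictMono (fun k => Fin.rev (τ k)) := fun a b hab =>
      Fin.rev_lt_rev.2 (h hab)
    have : (fun k => Fin.rev (τ k)) = id := by
      have hs : Function.Surjective (fun k => Fin.rev (τ k)) :=
        Fin.rev_surjective.comp τ.surjective
      haveI : WellFoundedLT (Fin n) := inferInstance
      have hr : Set.range (fun k => Fin.rev (τ k)) = Set.range (id : Fin n → Fin n) := by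
        simp [Set.range_id, Set.range_eq_univ.2 hs]
      exact (StrictMono.range_inj hrev strictMono_id).1 hr
    apply Equiv.ext
    intro x
    have h1 := congrFun this x
    simp only [id] at h1
    have h2 := congrArg Fin.rev h1
    simpa using h2
  -- extract witnesses
  simp only [StrictMono, not_forall] at hnm
  obtain ⟨a, b, hab, hab2⟩ := hnm
  have hba : τ b < τ a := lt_of_le_of_ne (not_lt.1 hab2)
    (fun h => (ne_of_lt hab).symm (τ.injective h))
  simp only [StrictAnti, not_forall] at hna
  obtain ⟨c, d, hcd, hcd2⟩ := hna
  have hdc : τ c < τ d := lt_of_le_of_ne (not_lt.1 hcd2)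
    (fun h => (ne_of_lt hcd) (τ.injective h))
  constructor
  · -- increase: use p=a, q=b with τ b < τ a
    refine ⟨Equiv.swap (τ a) (τ b), ⟨τ a, τ b, ne_of_gt hba, rfl⟩, ?_⟩
    rw [swap_sum_key w τ (ne_of_lt hab)]
    have h1 : 0 < w a - w b := sub_pos.2 (hw hab)
    have h2 : 0 < w (τ b) - w (τ a) := sub_pos.2 (hw hba)
    nlinarith
  · refine ⟨Equiv.swap (τ c) (τ d), ⟨τ c, τ d, ne_of_lt hdc, rfl⟩, ?_⟩
    rw [swap_sum_key w τ (ne_of_lt hcd)]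
    have h1 : 0 < w c - w d := sub_pos.2 (hw hcd)
    have h2 : w (τ d) - w (τ c) < 0 := sub_neg.2 (hw hdc)
    nlinarith
end
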